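/- In a DAG, if node v is intervened upon (hard intervention setting X_v to a fixed value distribution independent of its parents), then in the resulting interventional distribution, X_v is independent of every non-descendant of v. Concretely for the factorized finite discrete model: if q(x_v | x_{PA_v}) = r(x_v) does not depend on the parent values, then under the interventional distribution, the marginal of (X_v, X_u) for any u that is not a descendant of v in G factorizes as the product of the marginal of X_v and the marginal of X_u. -/

import Mathlib

/-!
Summing out a coordinate `m` against a normalized kernel that, like every other factor, does not
depend on `x m` just removes that kernel, up to the factor `|S m|` counting the now free
coordinate. Taking the descendants of `v` from the top of the topological order, this removes all
of their kernels: the kernel of a non-descendant `j ≠ v` never reads `v` or a descendant, since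
otherwise `j` would be a descendant. What remains is `r (x v)` times a function `W` of the
non-descendants other than `v`, among them `u`. As `W` does not read `x v`, fixing `x v = s` on
top of `x u = t` multiplies the remaining sum by `r s`, which is also the marginal of `x v`.
-/

open Finset Function

section SummingOut

variable {ι : Type*} {S : ι → Type*} {R : Type*} [CommSemiring R]

theorem dependsOn_prod_kernel {T : Finset ι} {s : Set ι} {p : ∀ j, (Π i, S i) → S j → R}
    (hp : ∀ j ∈ T, DependsOn (p j) s) (hT : ↑T ⊆ s) :
    DependsOn (fun x => ∏ j ∈ T, p j x (x j)) s := fun _ _ h =>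
  prod_congr rfl fun j hj => by rw [hp j hj h, h j (hT hj)]

variable [Fintype ι] [DecidableEq ι] [∀ i, Fintype (S i)]

theorem sum_sum_update {M : Type*} [AddCommMonoid M] (m : ι) (H : (Π i, S i) → M) :
    ∑ x, ∑ b, H (update x m b) = Fintype.card (S m) • ∑ x, H x := by
  have hinv : Involutive fun q : (Π i, S i) × S m => (update q.1 m q.2, q.1 m) := by
    rintro ⟨x, b⟩
    simp
  calc ∑ x, ∑ b, H (update x m b)
      = ∑ q : (Π i, S i) × S m, H (update q.1 m q.2, q.1 m).1 :=
        (Fintype.sum_prod_type' ..).symm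
    _ = ∑ q : (Π i, S i) × S m, H q.1 := Equiv.sum_comp (hinv.toPerm _) fun q => H q.1
    _ = _ := by simp [Fintype.sum_prod_type, smul_sum]

theorem card_mul_sum_mul_kernel (m : ι) {G : (Π i, S i) → R} {q : (Π i, S i) → S m → R}
    (hG : DependsOn G {m}ᶜ) (hq : DependsOn q {m}ᶜ) :
    Fintype.card (S m) * ∑ x, G x * q x (x m) = ∑ x, G x * ∑ a, q x a := by
  have hupd : ∀ x (b : S m) i, i ∈ ({m}ᶜ : Set ι) → update x m b i = x i :=
    fun x b i hi => update_of_ne hi _ _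
  rw [← nsmul_eq_mul, ← sum_sum_update]
  refine sum_congr rfl fun x _ => ?_
  simp only [update_self, hG (hupd x _), hq (hupd x _), mul_sum]

end SummingOut

section Ordered

variable {ι : Type*} [Fintype ι] [DecidableEq ι] [LinearOrder ι] {S : ι → Type*}
  [∀ i, Fintype (S i)]

theorem prod_card_mul_sum_mul_prod_kernel {R : Type*} [CommSemiring R] (T : Finset ι)
    {p : ∀ j, (Π i, S i) → S j → R}
    (hp : ∀ j ∈ T, DependsOn (p j) (Set.Iio j)) (hp1 : ∀ j ∈ T, ∀ x, ∑ a, p j x a = 1)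
    {F : (Π i, S i) → R} (hF : DependsOn F (↑T)ᶜ) :
    (∏ j ∈ T, (Fintype.card (S j) : R)) * ∑ x, F x * ∏ j ∈ T, p j x (x j)
      = ∑ x, F x := by
  induction T using Finset.induction_on_max with
  | empty => simp
  | insert a T hlt ih =>
    have haT : a ∉ T := fun h => lt_irrefl a (hlt a h)
    have hpa : DependsOn (p a) {a}ᶜ :=
      (hp a (mem_insert_self a T)).mono fun i hi => ne_of_lt hi
    have hG : DependsOn (fun x => F x * ∏ j ∈ T, p j x (x j)) {a}ᶜ := by
      have hT : DependsOn (fun x => ∏ j ∈ T, p j x (x j)) {a}ᶜ :=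
        dependsOn_prod_kernel (fun j hj => (hp j (mem_insert_of_mem hj)).mono
          fun i hi => ne_of_lt (lt_trans hi (hlt j hj))) fun j hj => ne_of_lt (hlt j hj)
      have hF' : DependsOn F {a}ᶜ := hF.mono (by simp)
      exact fun x y h => by simp only [hF' h, hT h]
    calc _ = (∏ j ∈ T, (Fintype.card (S j) : R)) *
          (Fintype.card (S a) * ∑ x, (F x * ∏ j ∈ T, p j x (x j)) * p a x (x a)) := by
          rw [prod_insert haT, mul_comm (Fintype.card (S a) : R), mul_assoc]
          congr 2
          exact sum_congr rfl fun x _ => by rw [prod_insert haT]; ring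
      _ = ∑ x, F x := by
          rw [card_mul_sum_mul_kernel a hG hpa]
          simp only [hp1 a (mem_insert_self a T), mul_one]
          exact ih (fun j hj => hp j (mem_insert_of_mem hj))
            (fun j hj => hp1 j (mem_insert_of_mem hj)) (hF.mono (by simp))

theorem sum_mul_prod_erase_kernel {R : Type*} [Field R] [CharZero R] [∀ i, Nonempty (S i)]
    (v : ι) {p : ∀ j, (Π i, S i) → S j → R}
    (hp : ∀ j, DependsOn (p j) (Set.Iio j)) (hp1 : ∀ j x, ∑ a, p j x a = 1) (φ : S v → R) :
    ∑ x, φ (x v) * ∏ j ∈ univ.erase v, p j x (x j) = ∑ a, φ a := by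
  have hF : DependsOn (fun x => φ (x v)) (↑(univ.erase v))ᶜ := fun x y h =>
    congrArg φ (h v (by simp))
  have hcard : (Fintype.card (Π i, S i) : R)
      = Fintype.card (S v) * ∏ j ∈ univ.erase v, (Fintype.card (S j) : R) := by
    rw [Fintype.card_pi, Nat.cast_prod,
      mul_prod_erase _ (fun j => (Fintype.card (S j) : R)) (mem_univ v)]
  have hne : (Fintype.card (Π i, S i) : R) ≠ 0 := Nat.cast_ne_zero.mpr Fintype.card_ne_zero
  refine mul_left_cancel₀ hne ?_
  calc _ = Fintype.card (S v) * ∑ x : Π i, S i, (fun _ => (1 : R)) x * φ (x v) := by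
        rw [hcard, mul_assoc, prod_card_mul_sum_mul_prod_kernel _ (fun j _ => hp j)
          (fun j _ => hp1 j) hF]
        simp
    _ = _ := by
        rw [card_mul_sum_mul_kernel v (fun _ _ _ => rfl) (q := fun _ => φ) fun _ _ _ => rfl]
        simp

end Ordered

section DAG

variable {ι : Type*} [Fintype ι]

open Classical in
noncomputable def descendants (PA : ι → Finset ι) (v : ι) : Finset ι :=
  {j | Relation.TransGen (fun a b => a ∈ PA b) v j}

variable {PA : ι → Finset ι} {v : ι}

theorem mem_descendants {j : ι} :
    j ∈ descendants PA v ↔ Relation.TransGen (fun a b => a ∈ PA b) v j := by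
  simp [descendants]

theorem lt_of_mem_descendants [LinearOrder ι] (hacyc : ∀ j, ∀ k ∈ PA j, k < j) {j : ι}
    (hj : j ∈ descendants PA v) : v < j := by
  rw [mem_descendants] at hj
  induction hj with
  | single h => exact hacyc _ _ h
  | tail _ h ih => exact ih.trans (hacyc _ _ h)

theorem mem_descendants_of_mem_parents [DecidableEq ι] {j k : ι} (hk : k ∈ PA j)
    (hkv : k ∈ insert v (descendants PA v)) : j ∈ descendants PA v := by
  rcases mem_insert.mp hkv with rfl | hkD
  · exact mem_descendants.mpr (.single hk)
  · exact mem_descendants.mpr ((mem_descendants.mp hkD).tail hk)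

variable [DecidableEq ι] {S : ι → Type*} {R : Type*} [CommSemiring R]
  {p : ∀ j, (Π i, S i) → S j → R}

theorem dependsOn_prod_nondescendants (hdep : ∀ j, DependsOn (p j) (PA j)) :
    DependsOn (fun x => ∏ j ∈ univ.erase v \ descendants PA v, p j x (x j))
      (↑(insert v (descendants PA v)))ᶜ := by
  refine dependsOn_prod_kernel (fun j hj => (hdep j).mono fun k hk hkv => ?_) fun j hj => ?_
  · exact (mem_sdiff.mp hj).2 (mem_descendants_of_mem_parents hk hkv)
  · obtain ⟨hjv, hjD⟩ := mem_sdiff.mp hj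
    simpa [ne_of_mem_erase hjv] using hjD

theorem card_mul_sum_mul_prod_erase_eq_sum_nondescendants [LinearOrder ι] [∀ i, Fintype (S i)]
    (hacyc : ∀ j, ∀ k ∈ PA j, k < j) (hdep : ∀ j, DependsOn (p j) (PA j))
    (hp1 : ∀ j x, ∑ a, p j x a = 1) {Ψ : (Π i, S i) → R}
    (hΨ : DependsOn Ψ (↑(insert v (descendants PA v)))ᶜ) (φ : S v → R) :
    (Fintype.card (S v) * ∏ j ∈ descendants PA v, (Fintype.card (S j) : R)) *
        ∑ x, φ (x v) * Ψ x * ∏ j ∈ univ.erase v, p j x (x j)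
      = (∑ a, φ a) * ∑ x, Ψ x * ∏ j ∈ univ.erase v \ descendants PA v, p j x (x j) := by
  set D := descendants PA v
  set W := fun x : Π i, S i => ∏ j ∈ univ.erase v \ D, p j x (x j)
  have hW : DependsOn W (↑(insert v D))ᶜ := dependsOn_prod_nondescendants hdep
  have hvD : v ∉ D := fun h => lt_irrefl v (lt_of_mem_descendants hacyc h)
  have hDsub : D ⊆ univ.erase v := fun j hj =>
    mem_erase.mpr ⟨(lt_of_mem_descendants hacyc hj).ne', mem_univ j⟩
  have hF : DependsOn (fun x => φ (x v) * Ψ x * W x) (↑D)ᶜ := by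
    have hsub : (↑(insert v D) : Set ι)ᶜ ⊆ (↑D)ᶜ := by simp
    exact fun x y h => by
      simp only [hΨ.mono hsub h, hW.mono hsub h, h v (by simpa using hvD)]
  have hG : DependsOn (fun x => Ψ x * W x) {v}ᶜ := by
    have hsub : (↑(insert v D) : Set ι)ᶜ ⊆ {v}ᶜ := by simp
    exact fun x y h => by simp only [hΨ.mono hsub h, hW.mono hsub h]
  have hmarg := prod_card_mul_sum_mul_prod_kernel D
    (fun j _ => (hdep j).mono (hacyc j)) (fun j _ => hp1 j) hF
  have hv := card_mul_sum_mul_kernel v hG (q := fun _ => φ) fun _ _ _ => rfl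
  calc _ = Fintype.card (S v) * ((∏ j ∈ D, (Fintype.card (S j) : R)) *
        ∑ x, φ (x v) * Ψ x * W x * ∏ j ∈ D, p j x (x j)) := by
        rw [mul_assoc]
        congr 2
        exact sum_congr rfl fun x _ => by
          rw [← prod_sdiff hDsub]
          simp only [W]
          ring
    _ = Fintype.card (S v) * ∑ x, Ψ x * W x * φ (x v) := by
        rw [hmarg]
        exact congrArg _ (sum_congr rfl fun x _ => by ring)
    _ = _ := by rw [hv, ← sum_mul, mul_comm]

end DAG

theorem hard_intervention_indep_nondescendant_general
    (n : ℕ) (S : Fin n → Type) [∀ j, Fintype (S j)] [∀ j, DecidableEq (S j)]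
    (PA : Fin n → Finset (Fin n))
    (hacyc : ∀ j, ∀ k ∈ PA j, k < j)  -- topological ordering of the DAG
    (p : ∀ j : Fin n, ((k : Fin n) → S k) → S j → ℝ)
    (hdep : ∀ j, ∀ x y : (k : Fin n) → S k,
      (∀ k ∈ PA j, x k = y k) → p j x = p j y)
    (hsum : ∀ j x, ∑ s : S j, p j x s = 1)
    (v : Fin n) (r : S v → ℝ)
    (hrsum : ∑ s : S v, r s = 1)
    (u : Fin n) (huv : u ≠ v)
    (hnondesc : ¬ Relation.TransGen (fun a b => a ∈ PA b) v u) :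
    ∀ (s : S v) (t : S u),
      -- interventional distribution P_v
      (∑ x : (k : Fin n) → S k,
          if x v = s ∧ x u = t then
            r (x v) * ∏ j ∈ Finset.univ.erase v, p j x (x j) else 0)
      = (∑ x : (k : Fin n) → S k,
          if x v = s then
            r (x v) * ∏ j ∈ Finset.univ.erase v, p j x (x j) else 0)
        * (∑ x : (k : Fin n) → S k,
          if x u = t then
            r (x v) * ∏ j ∈ Finset.univ.erase v, p j x (x j) else 0) := by
  intro s t
  rcases isEmpty_or_nonempty ((k : Fin n) → S k) with _ | ⟨⟨x₀⟩⟩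
  · simp
  have : ∀ k, Nonempty (S k) := fun k => ⟨x₀ k⟩
  have hpa : ∀ j, DependsOn (p j) (PA j) := fun j x y => hdep j x y
  set Ψ : ((k : Fin n) → S k) → ℝ := fun x => if x u = t then 1 else 0
  have hΨ : DependsOn Ψ (↑(insert v (descendants PA v)))ᶜ := fun x y h => by
    simp only [Ψ, h u (by simpa [huv, mem_descendants] using hnondesc)]
  set φ : S v → ℝ := fun a => if a = s then r a else 0
  have hφ : ∑ a, φ a = r s := by simp [φ]
  have hjoint := card_mul_sum_mul_prod_erase_eq_sum_nondescendants hacyc hpa hsum hΨ φ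
  have hmarg_u := card_mul_sum_mul_prod_erase_eq_sum_nondescendants hacyc hpa hsum hΨ r
  have hmarg_v := sum_mul_prod_erase_kernel v (fun j => (hpa j).mono (hacyc j)) hsum φ
  rw [hφ] at hjoint hmarg_v
  rw [hrsum, one_mul] at hmarg_u
  have hK : (Fintype.card (S v) * ∏ j ∈ descendants PA v, (Fintype.card (S j) : ℝ)) ≠ 0 :=
    by positivity
  refine mul_left_cancel₀ hK ?_
  simp only [Ψ, φ, ite_mul, mul_ite, one_mul, mul_one, zero_mul, mul_zero]
    at hjoint hmarg_v hmarg_u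
  simp only [← ite_and, and_comm] at hjoint ⊢
  rw [hjoint, hmarg_v, mul_left_comm, hmarg_u]

/-- after a hard intervention on node `v` (its kernel replaced by
a fixed distribution `r` independent of parents), `X v` is independent of
`X u` for every non-descendant `u ≠ v` of `v`: the joint marginal of
`(X v, X u)` factorizes. -/
theorem hard_intervention_indep_nondescendant
    (n : ℕ) (S : Fin n → Type) [∀ j, Fintype (S j)] [∀ j, DecidableEq (S j)]
    (PA : Fin n → Finset (Fin n))
    (hacyc : ∀ j, ∀ k ∈ PA j, k < j)  -- topological ordering of the DAG
    (p : ∀ j : Fin n, ((k : Fin n) → S k) → S j → ℝ)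
    (hdep : ∀ j, ∀ x y : (k : Fin n) → S k,
      (∀ k ∈ PA j, x k = y k) → p j x = p j y)
    (hnonneg : ∀ j x s, 0 ≤ p j x s)
    (hsum : ∀ j x, ∑ s : S j, p j x s = 1)
    (v : Fin n) (r : S v → ℝ)
    (hrnonneg : ∀ s, 0 ≤ r s) (hrsum : ∑ s : S v, r s = 1)
    (u : Fin n) (huv : u ≠ v)
    (hnondesc : ¬ Relation.TransGen (fun a b => a ∈ PA b) v u) :
    ∀ (s : S v) (t : S u),
      -- interventional distribution P_v
      (∑ x : (k : Fin n) → S k,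
          if x v = s ∧ x u = t then
            r (x v) * ∏ j ∈ Finset.univ.erase v, p j x (x j) else 0)
      = (∑ x : (k : Fin n) → S k,
          if x v = s then
            r (x v) * ∏ j ∈ Finset.univ.erase v, p j x (x j) else 0)
        * (∑ x : (k : Fin n) → S k,
          if x u = t then
            r (x v) * ∏ j ∈ Finset.univ.erase v, p j x (x j) else 0) :=
  hard_intervention_indep_nondescendant_general n S PA hacyc p hdep hsum v r hrsum u huv hnondesc
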